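/- Let a ∈ (0,1), a ≠ 1/2, and let μ_a be the image on [0,1] under φ((x_n)) = Σ x_n/2ⁿ of the Bernoulli(a) product measure on {0,1}^ℕ (mass a on digit 0). Then there is c > 1 such that for Lebesgue-almost every x ∈ (0,1), the distribution function F(x) = μ_a([0,x]) satisfies lim_{h→0} (F(x+h) - F(x))/|h|^c = 0. In particular F has derivative 0 Lebesgue-a.e. -/

import Mathlib

/-- The `i`-th binary digit of `x ∈ [0,1)` (expansion not eventually 1), `i ≥ 1`. -/
noncomputable def binDigit (x : ℝ) (i : ℕ) : ℕ := ⌊x * 2 ^ i⌋.toNat % 2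

/-- The number of indices `1 ≤ i ≤ n` with `binDigit x i = 1`. -/
noncomputable def onesCount (x : ℝ) (n : ℕ) : ℕ :=
  ((Finset.Icc 1 n).filter fun i => binDigit x i = 1).card

/-!
Under Lebesgue measure the binary digits of `x` are fair coin flips, so by a Chernoff bound and
Borel–Cantelli, for a.e. `x` the first `n` digits eventually contain between `θ n` and
`(1 - θ) n` ones, where `θ < 1/2` is close to `1/2`. The `μ`-mass of the generation-`n` dyadic
interval containing `x` is then at most `q ^ n`, with `q` close to `√(a (1 - a)) < 1/2`.
For `q < η < 1/2`, a second Borel–Cantelli argument keeps `x` eventually at distance `> η ^ n`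
from the dyadic points of generation `n`, so for `|h| ≤ η ^ n` the increment of `F` between `x`
and `x + h` is bounded by that mass. Choosing `n` with `η ^ (n + 1) < |h| ≤ η ^ n` gives
`|F (x + h) - F x| ≤ q⁻¹ |h| ^ (log q / log η)`, and `log q / log η > 1`.
-/

open Finset Real MeasureTheory Filter Topology

def bitCount (n k : ℕ) : ℕ := #{j ∈ range n | k.testBit j}

lemma bitCount_succ_of_lt {n k : ℕ} (hk : k < 2 ^ n) : bitCount (n + 1) k = bitCount n k := by
  simp [bitCount, range_add_one, filter_insert, Nat.testBit_lt_two_pow hk]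

lemma bitCount_succ_two_pow_add {n k : ℕ} (hk : k < 2 ^ n) :
    bitCount (n + 1) (2 ^ n + k) = bitCount n k + 1 := by
  rw [bitCount, range_add_one, filter_insert, if_pos (by simp [Nat.testBit_two_pow_add_eq,
    Nat.testBit_lt_two_pow hk]), card_insert_of_notMem (by simp), bitCount]
  congr 2
  refine filter_congr fun j hj => ?_
  rw [Nat.testBit_two_pow_add_gt (mem_range.1 hj)]

lemma sum_pow_bitCount {R : Type*} [CommSemiring R] (r : R) (n : ℕ) :
    ∑ k ∈ range (2 ^ n), r ^ bitCount n k = (1 + r) ^ n := by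
  induction n with
  | zero => simp [bitCount]
  | succ n ih =>
    rw [pow_succ, mul_two, sum_range_add, pow_succ, ← ih, mul_add, mul_one, sum_mul]
    congr 1
    · exact sum_congr rfl fun k hk => by rw [bitCount_succ_of_lt (mem_range.1 hk)]
    · exact sum_congr rfl fun k hk => by rw [bitCount_succ_two_pow_add (mem_range.1 hk), pow_succ]

lemma binDigit_eq_one_iff {x : ℝ} {i n : ℕ} (hi : i ≤ n) :
    binDigit x i = 1 ↔ ⌊x * 2 ^ n⌋₊.testBit (n - i) := by
  have hfloor : ⌊x * 2 ^ i⌋₊ = ⌊x * 2 ^ n⌋₊ / 2 ^ (n - i) := by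
    rw [← Nat.floor_div_natCast, Nat.cast_pow, Nat.cast_ofNat]
    congr 1
    rw [eq_div_iff (by positivity), mul_assoc, ← pow_add, Nat.add_sub_cancel' hi]
  rw [binDigit, Int.floor_toNat, hfloor, Nat.testBit_eq_decide_div_mod_eq, decide_eq_true_iff]

lemma onesCount_eq_bitCount (x : ℝ) (n : ℕ) : onesCount x n = bitCount n ⌊x * 2 ^ n⌋₊ := by
  refine card_bij' (fun i _ => n - i) (fun j _ => n - j) ?_ ?_ ?_ ?_
  · intro i hi
    simp only [mem_filter, mem_Icc, mem_range] at hi ⊢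
    exact ⟨by omega, (binDigit_eq_one_iff hi.1.2).1 hi.2⟩
  · intro j hj
    simp only [mem_filter, mem_Icc, mem_range] at hj ⊢
    refine ⟨by omega, (binDigit_eq_one_iff (Nat.sub_le n j)).2 ?_⟩
    rw [Nat.sub_sub_self hj.1.le]
    exact hj.2
  · intro i hi
    simp only [mem_filter, mem_Icc] at hi
    omega
  · intro j hj
    simp only [mem_filter, mem_range] at hj
    omega

lemma onesCount_natCast_div_two_pow (n k : ℕ) : onesCount ((k : ℝ) / 2 ^ n) n = bitCount n k := by
  rw [onesCount_eq_bitCount, div_mul_cancel₀ _ (by positivity), Nat.floor_natCast]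

lemma card_mul_rpow_le {r m : ℝ} (hr : 0 < r) {n : ℕ} {K : Finset ℕ} (hK : K ⊆ range (2 ^ n))
    (hKm : ∀ k ∈ K, r ^ m ≤ r ^ bitCount n k) : #K * r ^ m ≤ (1 + r) ^ n :=
  calc #K * r ^ m = #K • r ^ m := (nsmul_eq_mul _ _).symm
    _ ≤ ∑ k ∈ K, r ^ bitCount n k := card_nsmul_le_sum _ _ _ hKm
    _ ≤ ∑ k ∈ range (2 ^ n), r ^ bitCount n k :=
        sum_le_sum_of_subset_of_nonneg hK fun _ _ _ => by positivity
    _ = (1 + r) ^ n := sum_pow_bitCount r n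

lemma one_add_mul_rpow_neg_eq_exp_binEntropy {θ : ℝ} (h0 : 0 < θ) (h1 : θ < 1) :
    (1 + θ / (1 - θ)) * (θ / (1 - θ)) ^ (-θ) = exp (binEntropy θ) := by
  have h1θ : 0 < 1 - θ := sub_pos.2 h1
  have hsum : 1 + θ / (1 - θ) = (1 - θ)⁻¹ := by field_simp; ring
  rw [hsum, rpow_def_of_pos (div_pos h0 h1θ), log_div h0.ne' h1θ.ne', ← exp_log (inv_pos.2 h1θ),
    ← exp_add, binEntropy, log_inv, log_inv]
  ring_nf

-- `θ / (1 - θ)` is the parameter `r` minimizing the Chernoff bound `(1 + r) ^ n / r ^ (θ n)`.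
lemma card_le_exp_binEntropy_pow {θ : ℝ} (h0 : 0 < θ) (h1 : θ < 1) {n : ℕ} {K : Finset ℕ}
    (hK : K ⊆ range (2 ^ n))
    (hKθ : ∀ k ∈ K, (θ / (1 - θ)) ^ (θ * n) ≤ (θ / (1 - θ)) ^ bitCount n k) :
    (#K : ℝ) ≤ exp (binEntropy θ) ^ n := by
  have hr : 0 < θ / (1 - θ) := div_pos h0 (sub_pos.2 h1)
  have hcancel : (θ / (1 - θ)) ^ (θ * n) * ((θ / (1 - θ)) ^ (-θ)) ^ n = 1 := by
    rw [← rpow_natCast, ← rpow_mul hr.le, ← rpow_add hr, neg_mul, add_neg_cancel, rpow_zero]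
  calc (#K : ℝ) = #K * (θ / (1 - θ)) ^ (θ * n) * ((θ / (1 - θ)) ^ (-θ)) ^ n := by
        rw [mul_assoc, hcancel, mul_one]
    _ ≤ (1 + θ / (1 - θ)) ^ n * ((θ / (1 - θ)) ^ (-θ)) ^ n := by
        gcongr
        exact card_mul_rpow_le hr hK hKθ
    _ = exp (binEntropy θ) ^ n := by rw [← mul_pow, one_add_mul_rpow_neg_eq_exp_binEntropy h0 h1]

noncomputable def badBitCounts (θ : ℝ) (n : ℕ) : Finset ℕ :=
  {k ∈ range (2 ^ n) | (bitCount n k : ℝ) < θ * n ∨ (1 - θ) * n < bitCount n k}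

lemma card_badBitCounts_le {θ : ℝ} (h0 : 0 < θ) (h1 : θ ≤ 1 / 2) (n : ℕ) :
    (#(badBitCounts θ n) : ℝ) ≤ 2 * exp (binEntropy θ) ^ n := by
  have hlow : (#{k ∈ range (2 ^ n) | (bitCount n k : ℝ) < θ * n} : ℝ) ≤ exp (binEntropy θ) ^ n :=
    card_le_exp_binEntropy_pow h0 (by linarith) (filter_subset _ _) fun k hk => by
      rw [← rpow_natCast]
      exact rpow_le_rpow_of_exponent_ge (div_pos h0 (by linarith))
        ((div_le_one (by linarith)).2 (by linarith)) (mem_filter.1 hk).2.le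
  have hhigh : (#{k ∈ range (2 ^ n) | (1 - θ) * n < (bitCount n k : ℝ)} : ℝ) ≤
      exp (binEntropy θ) ^ n := by
    rw [← binEntropy_one_sub]
    refine card_le_exp_binEntropy_pow (by linarith) (by linarith) (filter_subset _ _) fun k hk => ?_
    rw [← rpow_natCast]
    exact rpow_le_rpow_of_exponent_le ((le_div_iff₀ (by linarith)).2 (by linarith))
      (mem_filter.1 hk).2.le
  calc (#(badBitCounts θ n) : ℝ)
      ≤ #{k ∈ range (2 ^ n) | (bitCount n k : ℝ) < θ * n} +
          #{k ∈ range (2 ^ n) | (1 - θ) * n < (bitCount n k : ℝ)} := by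
        rw [badBitCounts, filter_or]
        exact_mod_cast card_union_le _ _
    _ ≤ 2 * exp (binEntropy θ) ^ n := by linarith

def dyadicInterval (n k : ℕ) : Set ℝ := Set.Ico ((k : ℝ) / 2 ^ n) (((k : ℝ) + 1) / 2 ^ n)

lemma volume_biUnion_dyadicInterval_le (n : ℕ) (K : Finset ℕ) :
    volume (⋃ k ∈ K, dyadicInterval n k) ≤ ENNReal.ofReal (#K / 2 ^ n) :=
  calc volume (⋃ k ∈ K, dyadicInterval n k) ≤ ∑ k ∈ K, volume (dyadicInterval n k) :=
        measure_biUnion_finset_le _ _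
    _ = ∑ _k ∈ K, ENNReal.ofReal (1 / 2 ^ n) :=
        sum_congr rfl fun k _ => by rw [dyadicInterval, Real.volume_Ico]; ring_nf
    _ = ENNReal.ofReal (#K / 2 ^ n) := by
        rw [sum_const, nsmul_eq_mul, ← ENNReal.ofReal_natCast, ← ENNReal.ofReal_mul (by positivity),
          mul_one_div]

lemma mem_dyadicInterval_floor {x : ℝ} (hx : 0 ≤ x) (n : ℕ) :
    x ∈ dyadicInterval n ⌊x * 2 ^ n⌋₊ := by
  have h2n : (0 : ℝ) < 2 ^ n := by positivity
  constructor
  · rw [div_le_iff₀ h2n]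
    exact Nat.floor_le (by positivity)
  · rw [lt_div_iff₀ h2n]
    exact Nat.lt_floor_add_one _

lemma floor_mul_two_pow_lt {x : ℝ} (hx : x < 1) (n : ℕ) : ⌊x * 2 ^ n⌋₊ < 2 ^ n := by
  rw [Nat.floor_lt' (by positivity), Nat.cast_pow, Nat.cast_ofNat]
  nlinarith [pow_pos (two_pos (α := ℝ)) n]

lemma ae_eventually_notMem_of_le_geometric {α : Type*} [MeasurableSpace α] {μ : Measure α}
    {s : ℕ → Set α} {C ρ : ℝ} (hC : 0 ≤ C) (hρ0 : 0 ≤ ρ) (hρ1 : ρ < 1)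
    (hs : ∀ n, μ (s n) ≤ ENNReal.ofReal (C * ρ ^ n)) : ∀ᵐ x ∂μ, ∀ᶠ n in atTop, x ∉ s n := by
  refine ae_eventually_notMem (ne_top_of_le_ne_top ?_ (ENNReal.tsum_le_tsum hs))
  rw [← ENNReal.ofReal_tsum_of_nonneg (fun n => by positivity)
    ((summable_geometric_of_lt_one hρ0 hρ1).mul_left C)]
  exact ENNReal.ofReal_ne_top

lemma ae_eventually_lt_abs_sub_dyadic {η : ℝ} (hη0 : 0 < η) (hη : η < 1 / 2) :
    ∀ᵐ x : ℝ, ∀ᶠ n in atTop, ∀ k : ℕ, k ≤ 2 ^ n → η ^ n < |x - k / 2 ^ n| := by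
  have hvol (n : ℕ) : volume (⋃ k ∈ range (2 ^ n + 1), Metric.closedBall ((k : ℝ) / 2 ^ n) (η ^ n))
      ≤ ENNReal.ofReal (4 * (2 * η) ^ n) :=
    calc _ ≤ ∑ k ∈ range (2 ^ n + 1), volume (Metric.closedBall ((k : ℝ) / 2 ^ n) (η ^ n)) :=
          measure_biUnion_finset_le _ _
      _ = ENNReal.ofReal ((2 ^ n + 1 : ℕ) * (2 * η ^ n)) := by
          simp_rw [Real.volume_closedBall, sum_const, card_range, nsmul_eq_mul]
          rw [← ENNReal.ofReal_natCast, ← ENNReal.ofReal_mul (by positivity)]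
      _ ≤ ENNReal.ofReal (4 * (2 * η) ^ n) := by
          refine ENNReal.ofReal_le_ofReal ?_
          have : (1 : ℝ) ≤ 2 ^ n := one_le_pow₀ one_le_two
          rw [mul_pow]
          push_cast
          nlinarith [pow_pos hη0 n]
  have h2η : 0 ≤ 2 * η := by positivity
  filter_upwards [ae_eventually_notMem_of_le_geometric (by norm_num) h2η (by linarith) hvol]
    with x hx
  filter_upwards [hx] with n hn k hk
  simp only [Set.mem_iUnion, mem_range, Metric.mem_closedBall, Real.dist_eq, not_exists,
    not_le] at hn
  exact hn k (by omega)

lemma ae_eventually_onesCount_mem {θ : ℝ} (h0 : 0 < θ) (h1 : θ < 1 / 2) :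
    ∀ᵐ x : ℝ, ∀ᶠ n in atTop, x ∈ Set.Ico (0 : ℝ) 1 →
      θ * n ≤ onesCount x n ∧ (onesCount x n : ℝ) ≤ (1 - θ) * n := by
  have hρ : exp (binEntropy θ) / 2 < 1 := by
    rw [div_lt_one two_pos, ← exp_log two_pos, exp_lt_exp]
    exact binEntropy_lt_log_two.2 (by norm_num; linarith)
  have hvol (n : ℕ) : volume (⋃ k ∈ badBitCounts θ n, dyadicInterval n k)
      ≤ ENNReal.ofReal (2 * (exp (binEntropy θ) / 2) ^ n) := by
    refine (volume_biUnion_dyadicInterval_le n _).trans (ENNReal.ofReal_le_ofReal ?_)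
    rw [div_pow, ← mul_div_assoc]
    gcongr
    exact card_badBitCounts_le h0 h1.le n
  filter_upwards [ae_eventually_notMem_of_le_geometric zero_le_two (by positivity) hρ hvol]
    with x hx
  filter_upwards [hx] with n hn hx01
  by_contra hbad
  refine hn (Set.mem_biUnion ?_ (mem_dyadicInterval_floor hx01.1 n))
  rw [onesCount_eq_bitCount, ← not_lt, ← not_lt, ← not_or, not_not] at hbad
  exact mem_filter.2 ⟨mem_range.2 (floor_mul_two_pow_lt hx01.2 n), hbad⟩

lemma pow_sub_mul_pow_le_rpow {x y θ : ℝ} (hy : 0 < y) (hyx : y ≤ x) {n j : ℕ} (hj : j ≤ n)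
    (hθ : θ * n ≤ j) : x ^ (n - j) * y ^ j ≤ (x ^ (1 - θ) * y ^ θ) ^ n := by
  have hx : 0 < x := hy.trans_le hyx
  have hr : 0 < y / x := div_pos hy hx
  calc x ^ (n - j) * y ^ j = x ^ n * (y / x) ^ j := by
        rw [div_pow, pow_sub₀ _ hx.ne' hj]
        field_simp
    _ ≤ x ^ n * (y / x) ^ (θ * n) := by
        gcongr
        rw [← rpow_natCast]
        exact rpow_le_rpow_of_exponent_ge hr ((div_le_one hx).2 hyx) hθ
    _ = (x ^ (1 - θ) * y ^ θ) ^ n := by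
        rw [rpow_mul hr.le, rpow_natCast, ← mul_pow, div_rpow hy.le hx.le, rpow_sub hx, rpow_one]
        field_simp

lemma exists_pow_sub_mul_one_sub_pow_le {a : ℝ} (ha : a ∈ Set.Ioo (0 : ℝ) 1) (hane : a ≠ 1 / 2) :
    ∃ θ q : ℝ, 0 < θ ∧ θ < 1 / 2 ∧ 0 < q ∧ q < 1 / 2 ∧ ∀ n S : ℕ,
      θ * n ≤ S → (S : ℝ) ≤ (1 - θ) * n → a ^ (n - S) * (1 - a) ^ S ≤ q ^ n := by
  obtain ⟨ha0, ha1⟩ := ha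
  set x := max a (1 - a)
  set y := min a (1 - a)
  have hy : 0 < y := lt_min ha0 (by linarith)
  have hx : 0 < x := hy.trans_le min_le_max
  have hbound : ∀ θ : ℝ, 0 ≤ θ → ∀ n S : ℕ, θ * n ≤ S → (S : ℝ) ≤ (1 - θ) * n →
      a ^ (n - S) * (1 - a) ^ S ≤ (x ^ (1 - θ) * y ^ θ) ^ n := by
    intro θ hθ n S hlo hhi
    have hSn : S ≤ n := by exact_mod_cast hhi.trans (by nlinarith : (1 - θ) * n ≤ n)
    rcases le_total a (1 - a) with h | h
    · rw [show x = 1 - a from max_eq_right h, show y = a from min_eq_left h] at *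
      rw [mul_comm, ← Nat.sub_sub_self hSn, Nat.sub_sub_self (Nat.sub_le n S)]
      refine pow_sub_mul_pow_le_rpow ha0 h (Nat.sub_le n S) ?_
      push_cast [Nat.cast_sub hSn]
      linarith
    · rw [show x = a from max_eq_left h, show y = 1 - a from min_eq_right h] at *
      exact pow_sub_mul_pow_le_rpow hy h hSn hlo
  have hlim : Tendsto (fun θ : ℝ => x ^ (1 - θ) * y ^ θ) (𝓝 (1 / 2))
      (𝓝 (x ^ (1 - 1 / 2 : ℝ) * y ^ (1 / 2 : ℝ))) :=
    ((continuousAt_const_rpow hx.ne').comp (continuousAt_const.sub continuousAt_id)).mul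
      (continuousAt_const_rpow hy.ne') |>.tendsto
  have hval : x ^ (1 - 1 / 2 : ℝ) * y ^ (1 / 2 : ℝ) < 1 / 2 := by
    rw [show (1 - 1 / 2 : ℝ) = 1 / 2 by norm_num, ← mul_rpow hx.le hy.le, max_mul_min,
      ← sqrt_eq_rpow, sqrt_lt' one_half_pos]
    nlinarith [sq_pos_of_ne_zero (sub_ne_zero.2 hane)]
  obtain ⟨θ, hθq, hθ⟩ := ((hlim.eventually (gt_mem_nhds hval)).filter_mono nhdsWithin_le_nhds |>.and
    (Ioo_mem_nhdsLT one_half_pos)).exists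
  exact ⟨θ, _, hθ.1, hθ.2, by positivity, hθq, hbound θ hθ.1.le⟩

section DistributionFunction

variable (μ : Measure ℝ) [IsFiniteMeasure μ]

lemma abs_cdf_sub_le_measure_Ioc {u v : ℝ} (huv : u ≤ v) :
    |(μ (Set.Icc 0 v)).toReal - (μ (Set.Icc 0 u)).toReal| ≤ (μ (Set.Ioc u v)).toReal := by
  have hmono : μ (Set.Icc 0 u) ≤ μ (Set.Icc 0 v) := measure_mono (Set.Icc_subset_Icc_right huv)
  have hsplit : μ (Set.Icc 0 v) ≤ μ (Set.Icc 0 u) + μ (Set.Ioc u v) :=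
    (measure_mono Set.Icc_subset_Icc_union_Ioc).trans (measure_union_le _ _)
  rw [abs_of_nonneg (sub_nonneg.2 (ENNReal.toReal_mono (measure_ne_top _ _) hmono)),
    sub_le_iff_le_add', ← ENNReal.toReal_add (measure_ne_top _ _) (measure_ne_top _ _)]
  exact ENNReal.toReal_mono (by finiteness) hsplit

lemma abs_cdf_add_sub_le (x h : ℝ) :
    |(μ (Set.Icc 0 (x + h))).toReal - (μ (Set.Icc 0 x)).toReal| ≤
      (μ (Set.Ioc (x - |h|) (x + |h|))).toReal := by
  rcases le_total 0 h with hh | hh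
  · refine (abs_cdf_sub_le_measure_Ioc μ (by linarith)).trans
      (ENNReal.toReal_mono (measure_ne_top _ _) (measure_mono (Set.Ioc_subset_Ioc ?_ ?_))) <;>
      linarith [abs_of_nonneg hh]
  · rw [abs_sub_comm]
    refine (abs_cdf_sub_le_measure_Ioc μ (by linarith)).trans
      (ENNReal.toReal_mono (measure_ne_top _ _) (measure_mono (Set.Ioc_subset_Ioc ?_ ?_))) <;>
      linarith [abs_of_nonpos hh]

lemma abs_cdf_add_sub_le_of_dyadic_gap {x η : ℝ} {n : ℕ} (hx : x ∈ Set.Ico (0 : ℝ) 1)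
    (hgap : ∀ k : ℕ, k ≤ 2 ^ n → η ^ n < |x - k / 2 ^ n|) {h : ℝ} (hh : |h| ≤ η ^ n) :
    |(μ (Set.Icc 0 (x + h))).toReal - (μ (Set.Icc 0 x)).toReal| ≤
      (μ (dyadicInterval n ⌊x * 2 ^ n⌋₊)).toReal := by
  obtain ⟨hkx, hxk⟩ := mem_dyadicInterval_floor hx.1 n
  have hk := floor_mul_two_pow_lt hx.2 n
  have hleft := hgap _ hk.le
  have hright := hgap _ hk
  rw [abs_of_nonneg (sub_nonneg.2 hkx)] at hleft
  rw [abs_sub_comm, Nat.cast_succ, abs_of_pos (sub_pos.2 hxk)] at hright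
  refine (abs_cdf_add_sub_le μ x h).trans
    (ENNReal.toReal_mono (measure_ne_top _ _) (measure_mono fun y hy => ⟨?_, ?_⟩))
  · linarith [hy.1]
  · linarith [hy.2]

end DistributionFunction

lemma eventually_abs_le_mul_rpow_of_pow {g : ℝ → ℝ} {η q : ℝ} (hη0 : 0 < η) (hη1 : η < 1)
    (hq0 : 0 < q) (hq1 : q ≤ 1) {N : ℕ} (hg : ∀ n ≥ N, ∀ h, |h| ≤ η ^ n → |g h| ≤ q ^ n) :
    ∀ᶠ h in 𝓝[≠] (0 : ℝ), |g h| ≤ q⁻¹ * |h| ^ (log q / log η) := by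
  have hηN : 0 < η ^ N := pow_pos hη0 N
  have hsmall : ∀ᶠ h in 𝓝 (0 : ℝ), |h| < η ^ N := by
    simpa using eventually_abs_sub_lt (0 : ℝ) hηN
  filter_upwards [nhdsWithin_le_nhds hsmall, self_mem_nhdsWithin] with h hsmall hne
  have hh0 : 0 < |h| := abs_pos.2 hne
  obtain ⟨m, hlt, hle⟩ := exists_nat_pow_near_of_lt_one (div_pos hh0 hηN)
    ((div_le_one hηN).2 hsmall.le) hη0 hη1
  rw [lt_div_iff₀ hηN, ← pow_add] at hlt
  rw [div_le_iff₀ hηN, ← pow_add] at hle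
  have hηq : η ^ (log q / log η) = q := by
    rw [rpow_def_of_pos hη0, mul_div_cancel₀ _ (log_neg hη0 hη1).ne, exp_log hq0]
  calc |g h| ≤ q ^ (m + N) := hg _ (Nat.le_add_left N m) h hle
    _ = q⁻¹ * (η ^ (m + 1 + N)) ^ (log q / log η) := by
        rw [← rpow_pow_comm hη0.le, hηq, add_right_comm, pow_succ]
        field_simp
    _ ≤ q⁻¹ * |h| ^ (log q / log η) := by
        have hc : 0 ≤ log q / log η :=
          div_nonneg_of_nonpos (log_nonpos hq0.le hq1) (log_neg hη0 hη1).le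
        gcongr

lemma tendsto_div_abs_rpow_of_abs_le {g : ℝ → ℝ} {C c c' : ℝ} (hcc' : c < c')
    (hg : ∀ᶠ h in 𝓝[≠] (0 : ℝ), |g h| ≤ C * |h| ^ c') :
    Tendsto (fun h => g h / |h| ^ c) (𝓝[≠] 0) (𝓝 0) := by
  have hlim : Tendsto (fun h : ℝ => C * |h| ^ (c' - c)) (𝓝[≠] 0) (𝓝 0) := by
    have : ContinuousAt (fun h : ℝ => C * |h| ^ (c' - c)) 0 :=
      continuousAt_const.mul (continuous_abs.continuousAt.rpow_const (Or.inr (sub_pos.2 hcc').le))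
    simpa [zero_rpow (sub_pos.2 hcc').ne'] using this.tendsto.mono_left nhdsWithin_le_nhds
  refine squeeze_zero_norm' ?_ hlim
  filter_upwards [hg, self_mem_nhdsWithin] with h hgh hne
  have hc : 0 < |h| ^ c := rpow_pos_of_pos (abs_pos.2 hne) c
  rw [norm_div, Real.norm_eq_abs, Real.norm_eq_abs, abs_of_pos hc, div_le_iff₀ hc, mul_assoc,
    ← rpow_add (abs_pos.2 hne), sub_add_cancel]
  exact hgh

lemma hasDerivAt_zero_of_tendsto_div_abs {f : ℝ → ℝ} {x : ℝ}
    (hf : Tendsto (fun h => (f (x + h) - f x) / |h|) (𝓝[≠] 0) (𝓝 0)) : HasDerivAt f 0 x := by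
  rw [hasDerivAt_iff_tendsto_slope_zero, tendsto_zero_iff_norm_tendsto_zero]
  rw [tendsto_zero_iff_norm_tendsto_zero] at hf
  refine hf.congr fun h => ?_
  simp [div_eq_inv_mul]

theorem bernoulli_cdf_flat (a : ℝ) (ha : a ∈ Set.Ioo (0:ℝ) 1) (hane : a ≠ 1/2)
    (μ : MeasureTheory.Measure ℝ) [MeasureTheory.IsProbabilityMeasure μ]
    (hμd : ∀ n : ℕ, ∀ k : ℕ, k < 2^n →
      μ (Set.Ico ((k:ℝ)/2^n) (((k:ℝ)+1)/2^n)) =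
        ENNReal.ofReal (a ^ (n - onesCount ((k:ℝ)/2^n) n) *
          (1-a) ^ onesCount ((k:ℝ)/2^n) n)) :
    ∃ c : ℝ, 1 < c ∧ ∀ᵐ x ∂(MeasureTheory.volume : MeasureTheory.Measure ℝ),
      x ∈ Set.Ioo (0:ℝ) 1 →
      Filter.Tendsto
        (fun h : ℝ => ((μ (Set.Icc 0 (x+h))).toReal - (μ (Set.Icc 0 x)).toReal) / |h| ^ c)
        (nhdsWithin 0 {0}ᶜ) (nhds 0) ∧
      HasDerivAt (fun y => (μ (Set.Icc 0 y)).toReal) 0 x := by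
  obtain ⟨θ, q, hθ0, hθ, hq0, hq, hmass⟩ := exists_pow_sub_mul_one_sub_pow_le ha hane
  obtain ⟨η, hqη, hη⟩ := exists_between hq
  have hη0 : 0 < η := hq0.trans hqη
  have hc' : 1 < log q / log η :=
    (one_lt_div_of_neg (log_neg hη0 (by linarith))).2 (log_lt_log hq0 hqη)
  refine ⟨(1 + log q / log η) / 2, by linarith, ?_⟩
  filter_upwards [ae_eventually_onesCount_mem hθ0 hθ, ae_eventually_lt_abs_sub_dyadic hη0 hη]
    with x hones hgap hx
  obtain ⟨N, hN⟩ := (hones.and hgap).exists_forall_of_atTop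
  have hscale : ∀ n ≥ N, ∀ h, |h| ≤ η ^ n →
      |(μ (Set.Icc 0 (x + h))).toReal - (μ (Set.Icc 0 x)).toReal| ≤ q ^ n := by
    intro n hn h hh
    obtain ⟨hlo, hhi⟩ := (hN n hn).1 (Set.Ioo_subset_Ico_self hx)
    have hk := floor_mul_two_pow_lt hx.2 n
    calc _ ≤ (μ (dyadicInterval n ⌊x * 2 ^ n⌋₊)).toReal :=
          abs_cdf_add_sub_le_of_dyadic_gap μ (Set.Ioo_subset_Ico_self hx) (hN n hn).2 hh
      _ = a ^ (n - onesCount x n) * (1 - a) ^ onesCount x n := by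
          rw [dyadicInterval, hμd n _ hk, onesCount_natCast_div_two_pow, ← onesCount_eq_bitCount,
            ENNReal.toReal_ofReal
              (mul_nonneg (pow_nonneg ha.1.le _) (pow_nonneg (sub_nonneg.2 ha.2.le) _))]
      _ ≤ q ^ n := hmass n _ hlo hhi
  have hbound := eventually_abs_le_mul_rpow_of_pow hη0 (by linarith) hq0 (by linarith) hscale
  exact ⟨tendsto_div_abs_rpow_of_abs_le (by linarith) hbound,
    hasDerivAt_zero_of_tendsto_div_abs (by simpa using tendsto_div_abs_rpow_of_abs_le hc' hbound)⟩
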